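/- Let a ∈ ℝ^{n−1} and let l = {(a, t) : t > 0} be a vertical geodesic in the Poincaré half-space 𝒰ⁿ. For any point v ∈ 𝒰ⁿ, the infimum of d(v, w) over w ∈ l equals arsinh(‖v̄ − a‖ / vₙ), where v̄ is the vector of the first n−1 coordinates of v. -/

import Mathlib

/-!
Write `r = ‖v̄ − a‖` and `s = vₙ`. The point of `l` at height `t` is at distance
`arcosh ((r² + s² + t²) / (2 s t))` from `v`. By AM-GM the argument is at least `√(r² + s²) / s`,
with equality at `t = √(r² + s²)`, and `arcosh (√(r² + s²) / s) = arsinh (r / s)`.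
-/

/-- The inverse hyperbolic cosine on `[1, ∞)`. -/
noncomputable def arcosh (x : ℝ) : ℝ := Real.log (x + Real.sqrt (x ^ 2 - 1))

/-- Hyperbolic distance in the Poincaré half-space model. -/
noncomputable def hdist {n : ℕ} (x y : EuclideanSpace ℝ (Fin (n + 1))) : ℝ :=
  arcosh (1 + ‖x - y‖ ^ 2 / (2 * x (Fin.last n) * y (Fin.last n)))

lemma arcosh_le_arcosh {x y : ℝ} (hx : 1 ≤ x) (hxy : x ≤ y) : arcosh x ≤ arcosh y := by
  have hpos : 0 < x + √(x ^ 2 - 1) := by positivity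
  exact Real.log_le_log hpos (add_le_add hxy (Real.sqrt_le_sqrt (by nlinarith)))

lemma arcosh_sqrt_add_sq_div {r s : ℝ} (hr : 0 ≤ r) (hs : 0 < s) :
    arcosh (√(r ^ 2 + s ^ 2) / s) = Real.arsinh (r / s) := by
  have hsq : (√(r ^ 2 + s ^ 2) / s) ^ 2 = 1 + (r / s) ^ 2 := by
    rw [div_pow, div_pow, Real.sq_sqrt (by positivity)]
    field_simp
    ring
  have hx : √(r ^ 2 + s ^ 2) / s = √(1 + (r / s) ^ 2) := by
    rw [← hsq, Real.sqrt_sq (by positivity)]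
  rw [arcosh, hsq, add_sub_cancel_left, Real.sqrt_sq (by positivity), hx, Real.arsinh, add_comm]

lemma one_le_sqrt_add_sq_div {r s : ℝ} (hs : 0 < s) : 1 ≤ √(r ^ 2 + s ^ 2) / s := by
  rw [one_le_div hs]
  exact Real.le_sqrt_of_sq_le (by nlinarith)

lemma sqrt_div_le_add_sq_div {q s t : ℝ} (hq : 0 ≤ q) (hs : 0 < s) (ht : 0 < t) :
    √q / s ≤ (q + t ^ 2) / (2 * s * t) := by
  rw [div_le_div_iff₀ hs (by positivity)]
  nlinarith [sq_nonneg (t - √q), Real.sq_sqrt hq]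

lemma add_sq_sqrt_div {q s : ℝ} (hq : 0 < q) :
    (q + √q ^ 2) / (2 * s * √q) = √q / s := by
  have hq' : √q ≠ 0 := (Real.sqrt_pos.2 hq).ne'
  rcases eq_or_ne s 0 with rfl | hs
  · simp
  field_simp
  rw [Real.sq_sqrt hq.le]
  ring

lemma norm_sub_toLp_snoc_sq {n : ℕ} (v : EuclideanSpace ℝ (Fin (n + 1)))
    (b : EuclideanSpace ℝ (Fin n)) (t : ℝ) :
    ‖v - WithLp.toLp 2 (Fin.snoc b.ofLp t : Fin (n + 1) → ℝ)‖ ^ 2 =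
      ∑ i : Fin n, (v i.castSucc - b i) ^ 2 + (v (Fin.last n) - t) ^ 2 := by
  rw [EuclideanSpace.norm_sq_eq, Fin.sum_univ_castSucc]
  simp [Real.norm_eq_abs, sq_abs]

lemma hdist_toLp_snoc {n : ℕ} (v : EuclideanSpace ℝ (Fin (n + 1)))
    (b : EuclideanSpace ℝ (Fin n)) {t : ℝ} (hv : v (Fin.last n) ≠ 0) (ht : t ≠ 0) :
    hdist v (WithLp.toLp 2 (Fin.snoc b.ofLp t : Fin (n + 1) → ℝ)) =
      arcosh ((∑ i : Fin n, (v i.castSucc - b i) ^ 2 + v (Fin.last n) ^ 2 + t ^ 2) /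
        (2 * v (Fin.last n) * t)) := by
  rw [hdist, norm_sub_toLp_snoc_sq]
  simp only [Fin.snoc_last]
  congr 1
  field_simp
  ring

theorem dist_to_vertical_geodesic {n : ℕ} (a : EuclideanSpace ℝ (Fin n))
    (v : EuclideanSpace ℝ (Fin (n + 1))) (hv : 0 < v (Fin.last n)) :
    sInf {d : ℝ | ∃ t : ℝ, 0 < t ∧
        d = hdist v (WithLp.toLp 2 (Fin.snoc a.ofLp t : Fin (n + 1) → ℝ) : EuclideanSpace ℝ (Fin (n + 1)))} =
      Real.arsinh (Real.sqrt (∑ i : Fin n, (v i.castSucc - a i) ^ 2) / v (Fin.last n)) := by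
  set s := v (Fin.last n)
  set r := √(∑ i : Fin n, (v i.castSucc - a i) ^ 2)
  have hr : r ^ 2 = ∑ i : Fin n, (v i.castSucc - a i) ^ 2 := Real.sq_sqrt (by positivity)
  have hq : 0 < r ^ 2 + s ^ 2 := by positivity
  have hdist_eq : ∀ t, 0 < t → hdist v (WithLp.toLp 2 (Fin.snoc a.ofLp t : Fin (n + 1) → ℝ)) =
      arcosh ((r ^ 2 + s ^ 2 + t ^ 2) / (2 * s * t)) := fun t ht => by
    rw [hdist_toLp_snoc v a hv.ne' ht.ne', hr]
  have hmin : arcosh (√(r ^ 2 + s ^ 2) / s) = Real.arsinh (r / s) :=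
    arcosh_sqrt_add_sq_div (Real.sqrt_nonneg _) hv
  refine IsLeast.csInf_eq ⟨⟨√(r ^ 2 + s ^ 2), Real.sqrt_pos.2 hq, ?_⟩, ?_⟩
  · rw [hdist_eq _ (Real.sqrt_pos.2 hq), add_sq_sqrt_div hq, hmin]
  · rintro _ ⟨t, ht, rfl⟩
    rw [← hmin, hdist_eq t ht]
    exact arcosh_le_arcosh (one_le_sqrt_add_sq_div hv) (sqrt_div_le_add_sq_div hq.le hv ht)
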